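/- arXiv:1612.05303 — 4 statements merged into one kernel-verified Lean document; each statement's English description precedes it below -/
import Mathlib

section
/- Let k be a field of characteristic zero, λ₁, …, λ_n ∈ k elements that are linearly independent over ℚ, and δ the derivation of K = k[x₁^{±1},…,x_n^{±1}] with δ(x_i) = λ_i x_i. Then the only δ-stable ideals of K are 0 and K. -/
/-!
The monomials `x^a` are eigenvectors of `δ` with eigenvalue `ε a = ∑ aᵢλᵢ`, and `ℚ`-linear
independence of the `λᵢ` makes `ε` injective. In a nonzero `δ`-stable ideal pick `f ≠ 0` of
minimal support and a monomial `x^a` occurring in it: `δ f - ε a • f` lies in the ideal and has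
support `supp f \ {a}`, so it vanishes, forcing `f` to be a monomial, which is a unit.
-/

open AddMonoidAlgebra

theorem LinearIndependent.injective_sum_zsmul {ι M : Type*} [Fintype ι] [AddCommGroup M]
    [Module ℚ M] {v : ι → M} (hv : LinearIndependent ℚ v) :
    Function.Injective fun a : ι → ℤ => ∑ i, a i • v i :=
  linearIndependent_iff_injective_fintypeLinearCombination.mp (hv.restrict_scalars' ℤ)

namespace AddMonoidAlgebra

theorem eq_top_of_single_mem {k G : Type*} [DivisionRing k] [AddGroup G] {I : Ideal k[G]}
    {a : G} {c : k} (hc : c ≠ 0) (h : single a c ∈ I) : I = ⊤ := by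
  have hunit : single (-a) c⁻¹ * single a c = (1 : k[G]) := by
    rw [single_mul_single, neg_add_cancel, inv_mul_cancel₀ hc, one_def]
  rw [Ideal.eq_top_iff_one, ← hunit]
  exact I.mul_mem_left _ h

section Diagonal

variable {k G : Type*} [CommRing k] {D : k[G] →ₗ[k] k[G]} {ε : G → k}

theorem coeff_apply_of_map_single_one (hD : ∀ a, D (single a 1) = ε a • single a 1)
    (f : k[G]) (b : G) : (D f).coeff b = ε b * f.coeff b := by
  classical
  induction f using induction_linear with
  | zero => simp
  | add f g hf hg => simp only [map_add, coeff_add, Finsupp.add_apply, hf, hg, mul_add]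
  | single a c =>
    have hsingle : (single a c : k[G]) = c • single a 1 := by rw [smul_single', mul_one]
    rw [hsingle, map_smul, hD, smul_smul, smul_single', mul_one, coeff_smul_apply, coeff_single,
      coeff_single, Finsupp.single_apply, Finsupp.single_apply, smul_eq_mul]
    split_ifs with hab
    · rw [hab, mul_one, mul_comm]
    · simp

theorem coeff_sub_smul_apply (hD : ∀ a, D (single a 1) = ε a • single a 1)
    (f : k[G]) (a b : G) : (D f - ε a • f).coeff b = (ε b - ε a) * f.coeff b := by
  rw [coeff_sub, Finsupp.sub_apply, coeff_apply_of_map_single_one hD, coeff_smul_apply,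
    smul_eq_mul, sub_mul]

variable [NoZeroDivisors k]

theorem support_sub_smul_eq_erase [DecidableEq G] (hD : ∀ a, D (single a 1) = ε a • single a 1)
    (hε : Function.Injective ε) (f : k[G]) (a : G) :
    (D f - ε a • f).coeff.support = f.coeff.support.erase a := by
  ext b
  simp only [Finsupp.mem_support_iff, Finset.mem_erase, coeff_sub_smul_apply hD, ne_eq,
    mul_eq_zero, sub_eq_zero, not_or, hε.eq_iff]

theorem exists_single_mem_of_ne_bot [AddMonoid G] (hD : ∀ a, D (single a 1) = ε a • single a 1)
    (hε : Function.Injective ε) {I : Ideal k[G]} (hI : ∀ f ∈ I, D f ∈ I) (hI0 : I ≠ ⊥) :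
    ∃ a c, c ≠ 0 ∧ single a c ∈ I := by
  classical
  have hex : ∃ m, ∃ f ∈ I, f ≠ 0 ∧ f.coeff.support.card = m := by
    obtain ⟨f, hfI, hf0⟩ := Submodule.exists_mem_ne_zero_of_ne_bot hI0
    exact ⟨_, f, hfI, hf0, rfl⟩
  obtain ⟨f, hfI, hf0, hcard⟩ := Nat.find_spec hex
  obtain ⟨a, ha⟩ := Finsupp.support_nonempty_iff.mpr (coeff_eq_zero.not.mpr hf0)
  have hg : D f - ε a • f = 0 := by
    by_contra hg0
    have hmin := Nat.find_min' hex
      ⟨D f - ε a • f, I.sub_mem (hI f hfI) (I.smul_of_tower_mem (ε a) hfI), hg0, rfl⟩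
    rw [support_sub_smul_eq_erase hD hε, ← hcard] at hmin
    exact (Finset.card_erase_lt_of_mem ha).not_ge hmin
  have hsupp : f.coeff.support = {a} := by
    rw [← coeff_eq_zero, ← Finsupp.support_eq_empty, support_sub_smul_eq_erase hD hε,
      Finset.erase_eq_empty_iff] at hg
    exact hg.resolve_left (Finset.ne_empty_of_mem ha)
  obtain ⟨hfa, hf⟩ := Finsupp.support_eq_singleton.mp hsupp
  exact ⟨a, f.coeff a, hfa, (coeff_injective hf : f = single a (f.coeff a)) ▸ hfI⟩

end Diagonal

end AddMonoidAlgebra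

/-- Let `k` be a field of characteristic zero, `λ₁, …, λ_n ∈ k` linearly independent over
`ℚ`, and `δ` the derivation of the Laurent polynomial ring
`K = k[x₁^{±1}, …, x_n^{±1}]` (the group algebra of `ℤⁿ`) with `δ(x^a) = (∑ aᵢλᵢ)·x^a`
(so `δ(x_i) = λ_i x_i`).  Then the only `δ`-stable ideals of `K` are `0` and `K`. -/
theorem delta_stable_ideals_trivial
    (k : Type*) [Field k] [CharZero k] (n : ℕ) (lam : Fin n → k)
    (hlam : LinearIndependent ℚ lam)
    (δ : Derivation k (AddMonoidAlgebra k (Fin n → ℤ)) (AddMonoidAlgebra k (Fin n → ℤ)))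
    (hδ : ∀ a : Fin n → ℤ,
      δ (AddMonoidAlgebra.single a 1) =
        (∑ i, a i • lam i) • AddMonoidAlgebra.single a 1) :
    ∀ I : Ideal (AddMonoidAlgebra k (Fin n → ℤ)),
      (∀ f ∈ I, δ f ∈ I) → I = ⊥ ∨ I = ⊤ := by
  intro I hI
  refine or_iff_not_imp_left.mpr fun hI0 => ?_
  obtain ⟨a, c, hc, hmem⟩ :=
    exists_single_mem_of_ne_bot (D := δ.toLinearMap) hδ hlam.injective_sum_zsmul hI hI0
  exact eq_top_of_single_mem hc hmem
end

section
/- Let K = k[x₁,…,x_n] (polynomial ring), δ a k-derivation of K with δ(x_i) ∈ k·x_i + k for each i, and R = K[x; δ]. If N is a finitely generated K-module with Hilbert polynomial of degree d (with respect to a standard filtration), then the induced module N ⊗_K R has GK dimension d + 1. -/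
/-!
Since `x f = f x + δ f` and `δ` maps `V = k + ∑ k xᵢ` into itself, hence `Vˢ` into `Vˢ` by the
Leibniz rule, the standard filtration of `R = K[x; δ]` is `W ^ m = ∑_{i ≤ m} φ(V ^ (m - i)) xⁱ`.
Acting on the generators of `N`, this gives `N·W ^ m = ∑_{i ≤ m} Nₘ₋ᵢ xⁱ`, where `Nₜ = N·V ^ t`;
the sum is direct because the induced module is `⨁ᵢ N xⁱ`, so `dim N·W ^ m = ∑_{t ≤ m} dim Nₜ`.
Partial sums of a function that is eventually a polynomial of degree `d` are `Θ(m ^ (d + 1))`,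
so `log_m` of that dimension tends to `d + 1`.
-/

open Filter MulOpposite

open Asymptotics Finset Module Polynomial Submodule Topology

section Growth

theorem pow_succ_div_le_sum_range_pow (d m : ℕ) :
    (m : ℝ) ^ (d + 1) / (d + 1) ≤ ∑ t ∈ range (m + 1), (t : ℝ) ^ d := by
  have hmono : MonotoneOn (fun x : ℝ => x ^ d) (Set.Icc 0 (0 + m)) := fun a ha b _ hab =>
    pow_le_pow_left₀ ha.1 hab d
  have := hmono.integral_le_sum
  simp only [zero_add, integral_pow, Nat.cast_add, Nat.cast_one] at this
  rw [sum_range_succ']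
  simpa using this.trans (le_add_of_nonneg_right (by positivity))

theorem sum_range_succ_pow_le (d m : ℕ) :
    ∑ t ∈ range (m + 1), (t : ℝ) ^ d ≤ (m + 1) * (m : ℝ) ^ d := by
  simpa using sum_le_card_nsmul (range (m + 1)) (fun t : ℕ => (t : ℝ) ^ d) _ fun t ht =>
    pow_le_pow_left₀ t.cast_nonneg (by exact_mod_cast mem_range_succ_iff.mp ht) d

theorem isTheta_sum_range_succ_pow (d : ℕ) :
    (fun m : ℕ => ∑ t ∈ range (m + 1), (t : ℝ) ^ d) =Θ[atTop] fun m => (m : ℝ) ^ (d + 1) := by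
  refine ⟨.of_bound 2 ?_, .of_bound (d + 1) (.of_forall fun m => ?_)⟩
  · filter_upwards [eventually_ge_atTop 1] with m hm
    have hm : (1 : ℝ) ≤ m := by exact_mod_cast hm
    rw [Real.norm_of_nonneg (by positivity), Real.norm_of_nonneg (by positivity), pow_succ]
    nlinarith [sum_range_succ_pow_le d m, pow_nonneg (zero_le_one.trans hm) d]
  · rw [Real.norm_of_nonneg (by positivity), Real.norm_of_nonneg (by positivity),
      ← div_le_iff₀' (by positivity)]
    exact pow_succ_div_le_sum_range_pow d m

theorem isTheta_sum_range_succ_of_eventually_eq_eval {h : ℕ → ℝ} {H : ℝ[X]} (hH : H ≠ 0)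
    (hh : ∀ᶠ t : ℕ in atTop, h t = H.eval (t : ℝ)) :
    (fun m => ∑ t ∈ range (m + 1), h t) =Θ[atTop] fun m => (m : ℝ) ^ (H.natDegree + 1) := by
  set d := H.natDegree
  set a := H.leadingCoeff
  have ha : a ≠ 0 := leadingCoeff_ne_zero.mpr hH
  have hequiv : h ~[atTop] fun t : ℕ => a * (t : ℝ) ^ d :=
    (H.isEquivalent_atTop_lead.comp_tendsto tendsto_natCast_atTop_atTop).congr_left
      (hh.mono fun _ ht => ht.symm)
  have herr : (fun t => h t - a * (t : ℝ) ^ d) =o[atTop] fun t : ℕ => (t : ℝ) ^ d :=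
    hequiv.isLittleO.trans_isBigO (isBigO_const_mul_self a _ _)
  have hdiv : Tendsto (fun n => ∑ t ∈ range n, (t : ℝ) ^ d) atTop atTop :=
    (tendsto_add_atTop_iff_nat 1).mp <| tendsto_atTop_mono (pow_succ_div_le_sum_range_pow d) <|
      ((tendsto_pow_atTop d.succ_ne_zero).comp tendsto_natCast_atTop_atTop).atTop_div_const
        (by positivity)
  have hsum := (herr.sum_range (fun _ => by positivity) hdiv).comp_tendsto
    (tendsto_add_atTop_nat 1)
  have hΘ := isTheta_sum_range_succ_pow d
  refine EventuallyEq.trans_isTheta (.of_eq (funext fun m => ?_))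
    ((hΘ.const_mul_left ha).add_isLittleO (hsum.trans_isTheta hΘ))
  simp [sum_sub_distrib, mul_sum]

theorem tendsto_logb_of_isTheta_pow {G : ℕ → ℝ} {e : ℕ}
    (hG : G =Θ[atTop] fun m => (m : ℝ) ^ e) :
    Tendsto (fun m : ℕ => Real.logb m (G m)) atTop (𝓝 e) := by
  obtain ⟨C, hC, hup⟩ := hG.isBigO.exists_pos
  obtain ⟨c, hc, hlo⟩ := hG.isBigO_symm.exists_pos
  have hlog : Tendsto (fun m : ℕ => Real.log m) atTop atTop :=
    Real.tendsto_log_atTop.comp tendsto_natCast_atTop_atTop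
  have hlim (a : ℝ) : Tendsto (fun m : ℕ => a / Real.log m + e) atTop (𝓝 e) := by
    simpa using (tendsto_const_nhds.div_atTop hlog).add_const (e : ℝ)
  have hbounds : ∀ᶠ m : ℕ in atTop, -Real.log c / Real.log m + e ≤ Real.logb m (G m) ∧
      Real.logb m (G m) ≤ Real.log C / Real.log m + e := by
    filter_upwards [hup.bound, hlo.bound, eventually_gt_atTop 1] with m hu hl hm
    have hlogm : 0 < Real.log m := Real.log_pos (by exact_mod_cast hm)
    have hpow : (0 : ℝ) < (m : ℝ) ^ e := by positivity
    rw [Real.norm_of_nonneg hpow.le] at hu hl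
    have hGpos : 0 < ‖G m‖ := pos_of_mul_pos_right (hpow.trans_le hl) hc.le
    rw [Real.logb, ← Real.log_abs (G m), ← Real.norm_eq_abs, div_add' _ _ _ hlogm.ne',
      div_add' _ _ _ hlogm.ne', div_le_div_iff_of_pos_right hlogm,
      div_le_div_iff_of_pos_right hlogm, ← Real.log_pow, ← Real.log_inv,
      ← Real.log_mul (by positivity) hpow.ne', ← Real.log_mul hC.ne' hpow.ne']
    exact ⟨Real.log_le_log (by positivity) (by rwa [inv_mul_le_iff₀ hc]),
      Real.log_le_log hGpos hu⟩
  exact tendsto_of_tendsto_of_tendsto_of_le_of_le' (hlim _) (hlim _)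
    (hbounds.mono fun _ => And.left) (hbounds.mono fun _ => And.right)

theorem tendsto_logb_sum_range_succ_of_eventually_eq_eval {h : ℕ → ℕ} {H : ℚ[X]} {d : ℕ}
    (hd : H.degree = d) (hh : ∀ᶠ t : ℕ in atTop, (h t : ℚ) = H.eval (t : ℚ)) :
    Tendsto (fun m : ℕ => Real.logb m (∑ t ∈ range (m + 1), h t : ℕ)) atTop (𝓝 (d + 1)) := by
  have hH0 : H.map (algebraMap ℚ ℝ) ≠ 0 :=
    (Polynomial.map_ne_zero_iff (algebraMap ℚ ℝ).injective).mpr (by rintro rfl; simp at hd)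
  have hdeg : (H.map (algebraMap ℚ ℝ)).natDegree = d :=
    natDegree_eq_of_degree_eq_some ((degree_map _ _).trans hd)
  have hh' : ∀ᶠ t : ℕ in atTop, (h t : ℝ) = (H.map (algebraMap ℚ ℝ)).eval (t : ℝ) := by
    filter_upwards [hh] with t ht
    rw [eval_map_algebraMap, ← map_natCast (algebraMap ℚ ℝ) t,
      aeval_algebraMap_apply_eq_algebraMap_eval, ← ht, map_natCast]
  have hΘ := isTheta_sum_range_succ_of_eventually_eq_eval hH0 hh'
  rw [hdeg] at hΘ
  exact_mod_cast tendsto_logb_of_isTheta_pow hΘ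

end Growth

section DirectSum

variable {k M M' : Type*} [DivisionRing k] [AddCommGroup M] [Module k M] [AddCommGroup M']
  [Module k M']

theorem iSupIndep.finrank_iSup {ι : Type*} [Fintype ι] {A : ι → Submodule k M}
    (h : iSupIndep A) [∀ i, FiniteDimensional k (A i)] :
    finrank k ↥(⨆ i, A i) = ∑ i, finrank k (A i) := by
  classical
  rw [iSup_eq_range_dfinsupp_lsum, LinearMap.finrank_range_of_inj h.dfinsupp_lsum_injective]
  exact finrank_directSum k fun i => A i

theorem iSupIndep.finrank_biSup {ι : Type*} {A : ι → Submodule k M} (h : iSupIndep A)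
    [∀ i, FiniteDimensional k (A i)] (s : Finset ι) :
    finrank k ↥(⨆ i ∈ s, A i) = ∑ i ∈ s, finrank k (A i) := by
  rw [iSup_subtype', ← sum_coe_sort s]
  exact iSupIndep.finrank_iSup (A := fun i : s => A i) (h.comp Subtype.val_injective)

theorem iSupIndep_map_of_sum_eq_zero {ι : Type*} {N : Submodule k M} {μ : ι → M →ₗ[k] M'}
    (hfree : ∀ (s : Finset ι) (ν : ι → M), (∀ i, ν i ∈ N) →
      ∑ i ∈ s, μ i (ν i) = 0 → ∀ i ∈ s, ν i = 0) :
    iSupIndep fun i => N.map (μ i) := by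
  classical
  rw [iSupIndep_iff_finsetSum_eq_zero_imp_eq_zero]
  intro s v hv hsum i hi
  have hpre (i : ι) : ∃ n ∈ N, i ∈ s → μ i n = v i := by
    by_cases hi : i ∈ s
    · obtain ⟨n, hn, hnv⟩ := mem_map.mp (hv i hi)
      exact ⟨n, hn, fun _ => hnv⟩
    · exact ⟨0, zero_mem N, fun h => absurd h hi⟩
  choose ν hνN hν using hpre
  rw [← hν i hi, hfree s ν hνN ((sum_congr rfl hν).trans hsum) i hi, map_zero]

theorem finrank_map_of_sum_eq_zero {ι : Type*} {N F : Submodule k M} {μ : ι → M →ₗ[k] M'}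
    (hfree : ∀ (s : Finset ι) (ν : ι → M), (∀ i, ν i ∈ N) →
      ∑ i ∈ s, μ i (ν i) = 0 → ∀ i ∈ s, ν i = 0) (hF : F ≤ N) (i : ι) :
    finrank k (F.map (μ i)) = finrank k F := by
  rw [← LinearMap.range_domRestrict]
  refine LinearMap.finrank_range_of_inj ((injective_iff_map_eq_zero _).mpr fun n hn => ?_)
  exact Subtype.ext <| hfree {i} (fun _ => n) (fun _ => hF n.2) (by simpa using hn) i
    (mem_singleton_self i)

theorem finrank_biSup_map_eq_sum {ι : Type*} {N : Submodule k M} {μ : ι → M →ₗ[k] M'}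
    (hfree : ∀ (s : Finset ι) (ν : ι → M), (∀ i, ν i ∈ N) →
      ∑ i ∈ s, μ i (ν i) = 0 → ∀ i ∈ s, ν i = 0)
    {F : ι → Submodule k M} (hF : ∀ i, F i ≤ N) [∀ i, FiniteDimensional k (F i)]
    (s : Finset ι) :
    finrank k ↥(⨆ i ∈ s, (F i).map (μ i)) = ∑ i ∈ s, finrank k (F i) := by
  rw [((iSupIndep_map_of_sum_eq_zero hfree).mono fun i => map_mono (hF i)).finrank_biSup s]
  exact sum_congr rfl fun i _ => finrank_map_of_sum_eq_zero hfree (hF i) i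

end DirectSum

section Action

variable {k A M : Type*} [CommSemiring k] [Semiring A] [Algebra k A] [AddCommMonoid M]
  [Module k M] [Module A M] [IsScalarTower k A M]

theorem Submodule.span_singleton_smul_eq_map (a : A) (N : Submodule k M) :
    span k {a} • N = N.map (DistribSMul.toLinearMap k M a) := by
  refine le_antisymm (smul_le.mpr fun b hb n hn => ?_)
    (map_le_iff_le_comap.mpr fun n hn => smul_mem_smul (mem_span_singleton_self a) hn)
  obtain ⟨c, rfl⟩ := mem_span_singleton.mp hb
  rw [smul_assoc, smul_comm]
  exact mem_map_of_mem (N.smul_mem c hn)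

theorem Submodule.FG.smul' {I : Submodule k A} {N : Submodule k M} (hI : I.FG) (hN : N.FG) :
    (I • N).FG := by
  have : I • N = Submodule.map₂ (Algebra.lsmul k k M).toLinearMap I N :=
    le_antisymm (smul_le.mpr fun _ hr _ => apply_mem_map₂ _ hr)
      (map₂_le.mpr fun _ hr _ => smul_mem_smul hr)
  exact this ▸ hI.map₂ _ hN

end Action

section RightAction

variable {k R M : Type*} [CommSemiring k] [Semiring R] [Algebra k R] [AddCommMonoid M]
  [Module k M] [Module Rᵐᵒᵖ M] [IsScalarTower k Rᵐᵒᵖ M]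

/-- A right `R`-module is a left `Rᵐᵒᵖ`-module, so `N₀ · S` is the product `Sᵒᵖ • N₀`. -/
theorem span_op_smul_eq_smul_span {ι : Type*} (g : ι → M) (S : Submodule k R) :
    span k {y | ∃ r ∈ S, ∃ j, y = op r • g j} =
      S.map (opLinearEquiv k : R ≃ₗ[k] Rᵐᵒᵖ).toLinearMap • span k (Set.range g) := by
  refine le_antisymm (span_le.mpr ?_) (smul_le.mpr fun a ha n hn => ?_)
  · rintro _ ⟨r, hr, j, rfl⟩
    exact smul_mem_smul (mem_map_of_mem hr) (subset_span ⟨j, rfl⟩)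
  · obtain ⟨r, hr, rfl⟩ := mem_map.mp ha
    induction hn using span_induction with
    | mem _ hy => obtain ⟨j, rfl⟩ := hy; exact subset_span ⟨r, hr, j, rfl⟩
    | zero => rw [smul_zero]; exact zero_mem _
    | add _ _ _ _ hu hv => rw [smul_add]; exact add_mem hu hv
    | smul c _ _ hn => rw [smul_comm]; exact smul_mem _ c hn

theorem span_op_smul_iSup_mul_span_singleton {ι : Type*} (g : ι → M) (S : ℕ → Submodule k R)
    (x : R) (s : Finset ℕ) :
    span k {y | ∃ r ∈ ⨆ i ∈ s, S i * span k {x ^ i}, ∃ j, y = op r • g j} =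
      ⨆ i ∈ s, (span k {y | ∃ r ∈ S i, ∃ j, y = op r • g j}).map
        (DistribSMul.toLinearMap k M (op (x ^ i))) := by
  simp only [span_op_smul_eq_smul_span, Submodule.map_iSup, Submodule.map_op_mul, iSup_smul,
    ← span_singleton_smul_eq_map, Submodule.map_span, Set.image_singleton]
  exact iSup_congr fun i => iSup_congr fun _ => Submodule.smul_assoc _ _ _

end RightAction

section OreExtension

theorem Derivation.apply_mem_pow {k A : Type*} [CommSemiring k] [CommSemiring A] [Algebra k A]
    (δ : Derivation k A A) {V : Submodule k A} (hV : ∀ f ∈ V, δ f ∈ V) :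
    ∀ (s : ℕ), ∀ f ∈ V ^ s, δ f ∈ V ^ s
  | 0, f, hf => by
    obtain ⟨a, rfl⟩ := Submodule.mem_one.mp (pow_zero V ▸ hf)
    simp
  | s + 1, f, hf => by
    rw [pow_succ] at hf ⊢
    refine Submodule.mul_induction_on hf (fun a ha b hb => ?_) fun u v hu hv => ?_
    · rw [Derivation.leibniz, smul_eq_mul, smul_eq_mul, mul_comm b]
      exact add_mem (mul_mem_mul ha (hV b hb)) (mul_mem_mul (δ.apply_mem_pow hV s a ha) hb)
    · rw [map_add]; exact add_mem hu hv

theorem MvPolynomial.derivation_apply_mem_span_one_X {σ k : Type*} [CommSemiring k]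
    {δ : Derivation k (MvPolynomial σ k) (MvPolynomial σ k)}
    (hδ : ∀ i, ∃ a b : k, δ (X i) = C a * X i + C b) :
    ∀ f ∈ span k (insert 1 (Set.range X)),
      δ f ∈ span k (insert 1 (Set.range (X : σ → MvPolynomial σ k))) := by
  suffices span k (insert 1 (Set.range X)) ≤
      (span k (insert 1 (Set.range X))).comap δ.toLinearMap from fun f hf => this hf
  refine span_le.mpr (Set.insert_subset_iff.mpr ⟨by simp, Set.range_subset_iff.mpr fun i => ?_⟩)
  obtain ⟨a, b, hab⟩ := hδ i
  rw [SetLike.mem_coe, Submodule.mem_comap, Derivation.coeFn_coe, hab, C_mul', ← mul_one (C b),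
    C_mul']
  exact add_mem (smul_mem _ a (subset_span (Set.mem_insert_of_mem _ ⟨i, rfl⟩)))
    (smul_mem _ b (subset_span (Set.mem_insert 1 _)))

theorem span_singleton_mul_map_le {k A R : Type*} [CommSemiring k] [CommSemiring A]
    [Algebra k A] [Semiring R] [Algebra k R] {φ : A →ₐ[k] R} {x : R} {δ : Derivation k A A}
    (hcomm : ∀ f, x * φ f = φ f * x + φ (δ f)) {U : Submodule k A} (hU : ∀ f ∈ U, δ f ∈ U) :
    span k {x} * U.map φ.toLinearMap ≤
      U.map φ.toLinearMap * span k {x} ⊔ U.map φ.toLinearMap := by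
  refine mul_le.mpr fun y hy z hz => ?_
  obtain ⟨a, rfl⟩ := mem_span_singleton.mp hy
  obtain ⟨f, hf, rfl⟩ := mem_map.mp hz
  rw [smul_mul_assoc, AlgHom.toLinearMap_apply, hcomm]
  exact smul_mem _ a <| add_mem
    (mem_sup_left (mul_mem_mul (mem_map_of_mem hf) (mem_span_singleton_self x)))
    (mem_sup_right (mem_map_of_mem (hU f hf)))

theorem Submodule.sup_pow_eq_iSup_pow_mul_pow {k R : Type*} [CommSemiring k] [Semiring R]
    [Algebra k R] {P X : Submodule k R} (hP : 1 ≤ P) (hXP : ∀ s, X * P ^ s ≤ P ^ s * X ⊔ P ^ s)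
    (m : ℕ) : (P ⊔ X) ^ m = ⨆ i ∈ range (m + 1), P ^ (m - i) * X ^ i := by
  refine le_antisymm ?_ (iSup₂_le fun i hi => ?_)
  · induction m with
    | zero => simp
    | succ m ih =>
      calc (P ⊔ X) ^ (m + 1) = (P ⊔ X) * (P ⊔ X) ^ m := pow_succ' _ _
        _ ≤ (P ⊔ X) * ⨆ i ∈ range (m + 1), P ^ (m - i) * X ^ i := mul_le_mul_right ih _
        _ = ⨆ i ∈ range (m + 1), (P ⊔ X) * (P ^ (m - i) * X ^ i) := by
          simp only [Submodule.mul_iSup]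
        _ ≤ _ := iSup₂_le fun i hi => ?_
      have hi : i ≤ m := mem_range_succ_iff.mp hi
      have hterm (j : ℕ) (hj : j ≤ m + 1) :
          P ^ (m + 1 - j) * X ^ j ≤ ⨆ i ∈ range (m + 2), P ^ (m + 1 - i) * X ^ i :=
        le_iSup₂_of_le j (mem_range_succ_iff.mpr hj) le_rfl
      rw [sup_mul]
      refine sup_le ?_ ?_
      · rw [← mul_assoc, ← pow_succ', show m - i + 1 = m + 1 - i by omega]
        exact hterm i (by omega)
      · calc X * (P ^ (m - i) * X ^ i) ≤ (P ^ (m - i) * X ⊔ P ^ (m - i)) * X ^ i := by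
              rw [← mul_assoc]; exact mul_le_mul_left (hXP _) _
          _ = P ^ (m + 1 - (i + 1)) * X ^ (i + 1) ⊔ P ^ (m - i) * X ^ i := by
              rw [sup_mul, mul_assoc, ← pow_succ', show m + 1 - (i + 1) = m - i by omega]
          _ ≤ _ := sup_le (hterm _ (by omega)) <|
              (mul_le_mul_left (pow_le_pow_right' hP (by omega)) _).trans (hterm i (by omega))
  · calc P ^ (m - i) * X ^ i ≤ (P ⊔ X) ^ (m - i) * (P ⊔ X) ^ i :=
          mul_le_mul' (pow_le_pow_left' le_sup_left _) (pow_le_pow_left' le_sup_right _)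
      _ = (P ⊔ X) ^ m := by rw [← pow_add, Nat.sub_add_cancel (mem_range_succ_iff.mp hi)]

theorem map_sup_span_singleton_pow_eq_iSup {k A R : Type*} [CommSemiring k] [CommSemiring A]
    [Algebra k A] [Semiring R] [Algebra k R] {φ : A →ₐ[k] R} {x : R} {δ : Derivation k A A}
    (hcomm : ∀ f, x * φ f = φ f * x + φ (δ f)) {V : Submodule k A} (hV1 : 1 ∈ V)
    (hδV : ∀ f ∈ V, δ f ∈ V) (m : ℕ) :
    (V.map φ.toLinearMap ⊔ span k {x}) ^ m =
      ⨆ i ∈ range (m + 1), (V ^ (m - i)).map φ.toLinearMap * span k {x ^ i} := by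
  have hxi (i : ℕ) : span k {x ^ i} = span k {x} ^ i := by rw [span_pow, Set.singleton_pow]
  simp only [Submodule.map_pow, hxi]
  refine sup_pow_eq_iSup_pow_mul_pow (one_le.mpr (map_one φ ▸ mem_map_of_mem hV1))
    (fun s => ?_) m
  rw [← Submodule.map_pow]
  exact span_singleton_mul_map_le hcomm (δ.apply_mem_pow hδV s)

theorem finrank_span_sup_pow_eq_sum {k A R M : Type*} [Field k] [CommSemiring A] [Algebra k A]
    [Semiring R] [Algebra k R] [AddCommGroup M] [Module k M] [Module Rᵐᵒᵖ M]
    [IsScalarTower k Rᵐᵒᵖ M] {φ : A →ₐ[k] R} {x : R} {δ : Derivation k A A}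
    (hcomm : ∀ f, x * φ f = φ f * x + φ (δ f))
    {V : Submodule k A} (hVfg : V.FG) (hV1 : 1 ∈ V) (hδV : ∀ f ∈ V, δ f ∈ V)
    {ι : Type*} [Finite ι] (g : ι → M) {NS : Submodule k M} (hg : ∀ c j, op (φ c) • g j ∈ NS)
    (hfree : ∀ (s : Finset ℕ) (ν : ℕ → M), (∀ i, ν i ∈ NS) →
      ∑ i ∈ s, op (x ^ i) • ν i = 0 → ∀ i ∈ s, ν i = 0) (m : ℕ) :
    finrank k (span k {y | ∃ r ∈ (V.map φ.toLinearMap ⊔ span k {x}) ^ m, ∃ j, y = op r • g j}) =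
      ∑ t ∈ range (m + 1), finrank k (span k {y | ∃ c ∈ V ^ t, ∃ j, y = op (φ c) • g j}) := by
  set N : ℕ → Submodule k M := fun s =>
    span k {y | ∃ r ∈ (V ^ s).map φ.toLinearMap, ∃ j, y = op r • g j}
  have hN (s : ℕ) : N s = span k {y | ∃ c ∈ V ^ s, ∃ j, y = op (φ c) • g j} := by
    dsimp only [N]; congr 1; ext; simp
  have hNfin (s : ℕ) : FiniteDimensional k (N s) := by
    rw [← fg_iff_finiteDimensional]
    dsimp only [N]
    rw [span_op_smul_eq_smul_span]
    exact (((hVfg.pow s).map _).map _).smul' (fg_span (Set.finite_range g))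
  have hNS (s : ℕ) : N s ≤ NS := by
    refine span_le.mpr ?_
    rintro _ ⟨_, ⟨c, -, rfl⟩, j, rfl⟩
    exact hg c j
  rw [map_sup_span_singleton_pow_eq_iSup hcomm hV1 hδV, span_op_smul_iSup_mul_span_singleton,
    finrank_biSup_map_eq_sum hfree fun i => hNS _, ← sum_range_reflect]
  refine sum_congr rfl fun t ht => ?_
  rw [Nat.add_sub_cancel, Nat.sub_sub_self (mem_range_succ_iff.mp ht), hN]

end OreExtension

theorem gkDim_induced_module_polynomial_general
    (k : Type*) [Field k] (n : ℕ)
    (R : Type*) [Ring R] [Algebra k R]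
    (φ : MvPolynomial (Fin n) k →ₐ[k] R) (x : R)
    (δ : Derivation k (MvPolynomial (Fin n) k) (MvPolynomial (Fin n) k))
    -- `δ(x_i) ∈ k·x_i + k` :
    (hδ : ∀ i : Fin n, ∃ a b : k,
      δ (MvPolynomial.X i) = MvPolynomial.C a * MvPolynomial.X i + MvPolynomial.C b)
    -- Ore extension commutation rule `x·f = f·x + δ(f)` :
    (hcomm : ∀ f : MvPolynomial (Fin n) k, x * φ f = φ f * x + φ (δ f))
    (M : Type*) [AddCommGroup M] [Module Rᵐᵒᵖ M] [Module k M]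
    (hcompk : ∀ (a : k) (m : M), a • m = op (algebraMap k R a) • m)
    -- `N` is the `K`-submodule generated by `g 0, …, g (p-1)` :
    (p : ℕ) (g : Fin p → M)
    (NS : Submodule k M)
    (hNS : NS = Submodule.span k {y : M | ∃ c : MvPolynomial (Fin n) k, ∃ j : Fin p,
      y = op (φ c) • g j})
    -- and the sum `∑ N·x^i` is direct, i.e. `M ≅ N ⊗_K R` :
    (hfree : ∀ (s : Finset ℕ) (ν : ℕ → M), (∀ i, ν i ∈ NS) →
      (∑ i ∈ s, op (x ^ i) • ν i) = 0 → ∀ i ∈ s, ν i = 0)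
    -- generating subspace of `K` spanned by `1` and the `x_i` :
    (V : Submodule k (MvPolynomial (Fin n) k))
    (hV : V = Submodule.span k (insert 1 (Set.range (MvPolynomial.X : Fin n →
      MvPolynomial (Fin n) k))))
    -- generating subspace of `R` spanned by the `x_i` and `x` :
    (W : Submodule k R) (hW : W = V.map φ.toLinearMap ⊔ Submodule.span k {x})
    -- the Hilbert function of the standard filtration of `N` is eventually a polynomial
    -- `H` of degree `d` :
    (H : Polynomial ℚ) (d : ℕ) (hHdeg : H.degree = d)
    (hH : ∀ᶠ m : ℕ in atTop,
      (Module.finrank k (Submodule.span k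
        {y : M | ∃ c ∈ (V ^ m : Submodule k (MvPolynomial (Fin n) k)), ∃ j : Fin p,
          y = op (φ c) • g j}) : ℚ) = H.eval (m : ℚ)) :
    Filter.limsup (fun m : ℕ => Real.logb m
        (Module.finrank k (Submodule.span k
          {y : M | ∃ r ∈ (W ^ m : Submodule k R), ∃ j : Fin p, y = op r • g j})))
      atTop = (d + 1 : ℝ) := by
  have : IsScalarTower k Rᵐᵒᵖ M :=
    ⟨fun a r y => by rw [Algebra.smul_def, MulOpposite.algebraMap_apply, mul_smul, ← hcompk]⟩
  have hV1 : (1 : MvPolynomial (Fin n) k) ∈ V := hV ▸ subset_span (Set.mem_insert 1 _)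
  have hδV : ∀ f ∈ V, δ f ∈ V := hV ▸ MvPolynomial.derivation_apply_mem_span_one_X hδ
  have hVfg : V.FG := hV ▸ fg_span ((Set.finite_range _).insert 1)
  have hg (c : MvPolynomial (Fin n) k) (j : Fin p) : op (φ c) • g j ∈ NS :=
    hNS ▸ subset_span ⟨c, j, rfl⟩
  subst hW
  simp_rw [finrank_span_sup_pow_eq_sum hcomm hVfg hV1 hδV g hg hfree]
  exact (tendsto_logb_sum_range_succ_of_eventually_eq_eval hHdeg hH).limsup_eq

/-- (GK dimension of induced modules, polynomial case.)  Let `K = k[x₁,…,x_n]`, `δ` a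
`k`-derivation of `K` with `δ(x_i) ∈ k·x_i + k`, and `R = K[x; δ]` the Ore extension
(modeled by `φ : K → R` and `x ∈ R` with `x·f = f·x + δ(f)`).  Let `M` be a right
`R`-module that is induced from a finitely generated `K`-submodule `N` (generated by
`g 0, …, g (p-1)`), i.e. `M = ⊕_{i≥0} N·x^i` freely.  If the Hilbert function of the
standard filtration of `N` is eventually a polynomial `H` of degree `d`, then the induced
module `N ⊗_K R = M` has GK dimension `d + 1`, GK dimension being `limsup_m log_m` of the
standard filtration dimensions. -/
theorem gkDim_induced_module_polynomial
    (k : Type*) [Field k] (n : ℕ)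
    (R : Type*) [Ring R] [Algebra k R]
    (φ : MvPolynomial (Fin n) k →ₐ[k] R) (x : R)
    (δ : Derivation k (MvPolynomial (Fin n) k) (MvPolynomial (Fin n) k))
    -- `δ(x_i) ∈ k·x_i + k` :
    (hδ : ∀ i : Fin n, ∃ a b : k,
      δ (MvPolynomial.X i) = MvPolynomial.C a * MvPolynomial.X i + MvPolynomial.C b)
    -- Ore extension commutation rule `x·f = f·x + δ(f)` :
    (hcomm : ∀ f : MvPolynomial (Fin n) k, x * φ f = φ f * x + φ (δ f))
    (M : Type*) [AddCommGroup M] [Module Rᵐᵒᵖ M] [Module k M]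
    (hcompk : ∀ (a : k) (m : M), a • m = op (algebraMap k R a) • m)
    -- `N` is the `K`-submodule generated by `g 0, …, g (p-1)` :
    (p : ℕ) (g : Fin p → M)
    (NS : Submodule k M)
    (hNS : NS = Submodule.span k {y : M | ∃ c : MvPolynomial (Fin n) k, ∃ j : Fin p,
      y = op (φ c) • g j})
    -- `M` is spanned by the `N·x^i` :
    (hgen : ∀ m : M, ∃ s : Finset ℕ, ∃ ν : ℕ → M, (∀ i, ν i ∈ NS) ∧
      m = ∑ i ∈ s, op (x ^ i) • ν i)
    -- and the sum `∑ N·x^i` is direct, i.e. `M ≅ N ⊗_K R` :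
    (hfree : ∀ (s : Finset ℕ) (ν : ℕ → M), (∀ i, ν i ∈ NS) →
      (∑ i ∈ s, op (x ^ i) • ν i) = 0 → ∀ i ∈ s, ν i = 0)
    -- generating subspace of `K` spanned by `1` and the `x_i` :
    (V : Submodule k (MvPolynomial (Fin n) k))
    (hV : V = Submodule.span k (insert 1 (Set.range (MvPolynomial.X : Fin n →
      MvPolynomial (Fin n) k))))
    -- generating subspace of `R` spanned by the `x_i` and `x` :
    (W : Submodule k R) (hW : W = V.map φ.toLinearMap ⊔ Submodule.span k {x})
    -- the Hilbert function of the standard filtration of `N` is eventually a polynomial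
    -- `H` of degree `d` :
    (H : Polynomial ℚ) (d : ℕ) (hHdeg : H.degree = d)
    (hH : ∀ᶠ m : ℕ in atTop,
      (Module.finrank k (Submodule.span k
        {y : M | ∃ c ∈ (V ^ m : Submodule k (MvPolynomial (Fin n) k)), ∃ j : Fin p,
          y = op (φ c) • g j}) : ℚ) = H.eval (m : ℚ)) :
    Filter.limsup (fun m : ℕ => Real.logb m
        (Module.finrank k (Submodule.span k
          {y : M | ∃ r ∈ (W ^ m : Submodule k R), ∃ j : Fin p, y = op r • g j})))
      atTop = (d + 1 : ℝ) :=
  gkDim_induced_module_polynomial_general k n R φ x δ hδ hcomm M hcompk p g NS hNS hfree V hV W hW H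
    d hHdeg hH
end

section
/- Let K = k[x₁^{±1},…,x_n^{±1}], δ a k-derivation of K with δ(x_i) ∈ k·x_i + k, and R = K[x; δ]. If N is a cyclic K-module whose standard filtration dimensions are eventually given by a polynomial of degree d, then GK(N ⊗_K R) = d + 1 = GK(N) + 1. -/
open Filter MulOpposite


private lemma aux_logb_pow_tendsto (c : ℝ) (hc : 0 < c) (e : ℕ) :
    Tendsto (fun m : ℕ => Real.logb m (c * (m : ℝ) ^ e)) atTop (nhds (e : ℝ)) := by
  have h1 : Tendsto (fun m : ℕ => Real.log (m : ℝ)) atTop atTop :=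
    Real.tendsto_log_atTop.comp tendsto_natCast_atTop_atTop
  have h2 : Tendsto (fun m : ℕ => Real.log c / Real.log (m : ℝ) + (e : ℝ)) atTop
      (nhds (0 + (e : ℝ))) :=
    (tendsto_const_nhds.div_atTop h1).add tendsto_const_nhds
  rw [zero_add] at h2
  refine h2.congr' ?_
  filter_upwards [eventually_gt_atTop 1] with m hm
  have hm1 : (1 : ℝ) < (m : ℝ) := by exact_mod_cast hm
  have hlog : Real.log (m : ℝ) ≠ 0 := ne_of_gt (Real.log_pos hm1)
  have hmpos : (0 : ℝ) < (m : ℝ) := by positivity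
  rw [Real.logb, Real.log_mul hc.ne' (by positivity), Real.log_pow]
  field_simp

private lemma aux_logb_squeeze (f : ℕ → ℝ) (e : ℕ) (c₁ c₂ : ℝ) (h₁ : 0 < c₁) (h₂ : 0 < c₂)
    (hb : ∀ᶠ m : ℕ in atTop, c₁ * (m : ℝ) ^ e ≤ f m ∧ f m ≤ c₂ * (m : ℝ) ^ e) :
    Tendsto (fun m : ℕ => Real.logb m (f m)) atTop (nhds (e : ℝ)) := by
  refine tendsto_of_tendsto_of_tendsto_of_le_of_le'
    (aux_logb_pow_tendsto c₁ h₁ e) (aux_logb_pow_tendsto c₂ h₂ e) ?_ ?_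
  · filter_upwards [hb, eventually_gt_atTop 1] with m hm hm1
    have hb1 : (1 : ℝ) < (m : ℝ) := by exact_mod_cast hm1
    have hx : (0 : ℝ) < c₁ * (m : ℝ) ^ e := by positivity
    exact (Real.logb_le_logb hb1 hx (lt_of_lt_of_le hx hm.1)).2 hm.1
  · filter_upwards [hb, eventually_gt_atTop 1] with m hm hm1
    have hb1 : (1 : ℝ) < (m : ℝ) := by exact_mod_cast hm1
    have hx : (0 : ℝ) < c₁ * (m : ℝ) ^ e := by positivity
    have hy : (0 : ℝ) < c₂ * (m : ℝ) ^ e := by positivity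
    exact (Real.logb_le_logb hb1 (lt_of_lt_of_le hx hm.1) hy).2 hm.2

private lemma aux_sum_bounds (g : ℕ → ℝ) (hg : ∀ i, 0 ≤ g i) (e : ℕ) (c₁ c₂ : ℝ)
    (h₁ : 0 < c₁) (h₂ : 0 < c₂)
    (hb : ∀ᶠ i : ℕ in atTop, c₁ * (i : ℝ) ^ e ≤ g i ∧ g i ≤ c₂ * (i : ℝ) ^ e) :
    ∃ C₁ C₂ : ℝ, 0 < C₁ ∧ 0 < C₂ ∧ ∀ᶠ m : ℕ in atTop,
      C₁ * (m : ℝ) ^ (e + 1) ≤ (∑ i ∈ Finset.range (m + 1), g i) ∧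
      (∑ i ∈ Finset.range (m + 1), g i) ≤ C₂ * (m : ℝ) ^ (e + 1) := by
  obtain ⟨m₀, hm₀⟩ := eventually_atTop.1 hb
  set B : ℝ := ∑ i ∈ Finset.range m₀, g i with hB
  have hB0 : 0 ≤ B := Finset.sum_nonneg fun i _ => hg i
  refine ⟨c₁ / (2 * 4 ^ e), B + 2 * c₂ + 1, by positivity, by positivity, ?_⟩
  filter_upwards [eventually_ge_atTop (2 * m₀ + 4)] with m hm
  have hm4 : 4 ≤ m := by omega
  have hmR : (4 : ℝ) ≤ (m : ℝ) := by exact_mod_cast hm4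
  have hmpos : (0 : ℝ) < (m : ℝ) := by linarith
  constructor
  · -- lower bound
    have hsub : Finset.Ico (m / 2) (m + 1) ⊆ Finset.range (m + 1) := by
      intro i hi
      simp only [Finset.mem_Ico] at hi
      exact Finset.mem_range.2 hi.2
    have hstep : ∑ i ∈ Finset.Ico (m / 2) (m + 1), g i ≤ ∑ i ∈ Finset.range (m + 1), g i :=
      Finset.sum_le_sum_of_subset_of_nonneg hsub (fun i _ _ => hg i)
    have hterm : ∀ i ∈ Finset.Ico (m / 2) (m + 1), c₁ * ((m : ℝ) / 4) ^ e ≤ g i := by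
      intro i hi
      simp only [Finset.mem_Ico] at hi
      have hi₀ : m₀ ≤ i := by omega
      have h4i : m ≤ 4 * i := by omega
      have hiR : (m : ℝ) / 4 ≤ (i : ℝ) := by
        rw [div_le_iff₀ (by norm_num)]
        have : (m : ℝ) ≤ (4 * i : ℕ) := by exact_mod_cast h4i
        push_cast at this
        linarith
      calc c₁ * ((m : ℝ) / 4) ^ e ≤ c₁ * (i : ℝ) ^ e := by
            apply mul_le_mul_of_nonneg_left (pow_le_pow_left₀ (by positivity) hiR e) h₁.le
        _ ≤ g i := (hm₀ i hi₀).1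
    have hcard : ((Finset.Ico (m / 2) (m + 1)).card : ℝ) ≥ (m : ℝ) / 2 := by
      rw [Nat.card_Ico]
      have h2 : m ≤ 2 * (m + 1 - m / 2) := by omega
      have : (m : ℝ) ≤ (2 * (m + 1 - m / 2) : ℕ) := by exact_mod_cast h2
      push_cast at this
      linarith
    have hsum : ((Finset.Ico (m / 2) (m + 1)).card : ℝ) * (c₁ * ((m : ℝ) / 4) ^ e) ≤
        ∑ i ∈ Finset.Ico (m / 2) (m + 1), g i := by
      have := Finset.card_nsmul_le_sum (Finset.Ico (m / 2) (m + 1))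
        g (c₁ * ((m : ℝ) / 4) ^ e) hterm
      simpa [nsmul_eq_mul] using this
    have hfin : c₁ / (2 * 4 ^ e) * (m : ℝ) ^ (e + 1) ≤
        ((Finset.Ico (m / 2) (m + 1)).card : ℝ) * (c₁ * ((m : ℝ) / 4) ^ e) := by
      have he4 : (0:ℝ) < 4 ^ e := by positivity
      have key : c₁ / (2 * 4 ^ e) * (m : ℝ) ^ (e + 1) =
          ((m : ℝ) / 2) * (c₁ * ((m : ℝ) / 4) ^ e) := by
        rw [div_pow, pow_succ]
        field_simp
      rw [key]
      exact mul_le_mul_of_nonneg_right hcard (by positivity)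
    linarith
  · -- upper bound
    have hsplit : ∑ i ∈ Finset.range (m + 1), g i =
        B + ∑ i ∈ Finset.Ico m₀ (m + 1), g i := by
      simp only [hB, Finset.range_eq_Ico]
      exact (Finset.sum_Ico_consecutive g (Nat.zero_le m₀) (by omega)).symm
    have hup : ∑ i ∈ Finset.Ico m₀ (m + 1), g i ≤ ((m:ℝ) + 1) * (c₂ * (m : ℝ) ^ e) := by
      calc ∑ i ∈ Finset.Ico m₀ (m + 1), g i
          ≤ ∑ i ∈ Finset.Ico m₀ (m + 1), c₂ * (m : ℝ) ^ e := by
            apply Finset.sum_le_sum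
            intro i hi
            simp only [Finset.mem_Ico] at hi
            have hiR : (i : ℝ) ≤ (m : ℝ) := by exact_mod_cast Nat.lt_succ_iff.1 hi.2
            calc g i ≤ c₂ * (i : ℝ) ^ e := (hm₀ i hi.1).2
              _ ≤ c₂ * (m : ℝ) ^ e :=
                mul_le_mul_of_nonneg_left (pow_le_pow_left₀ (by positivity) hiR e) h₂.le
        _ = ((Finset.Ico m₀ (m+1)).card : ℝ) * (c₂ * (m : ℝ) ^ e) := by
            rw [Finset.sum_const, nsmul_eq_mul]
        _ ≤ ((m:ℝ) + 1) * (c₂ * (m : ℝ) ^ e) := by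
            apply mul_le_mul_of_nonneg_right _ (by positivity)
            rw [Nat.card_Ico]
            have : ((m + 1 - m₀ : ℕ) : ℝ) ≤ ((m + 1 : ℕ) : ℝ) := by
              exact_mod_cast Nat.sub_le _ _
            push_cast at this ⊢
            linarith
    have hmain : B + ((m:ℝ) + 1) * (c₂ * (m : ℝ) ^ e) ≤ (B + 2 * c₂ + 1) * (m : ℝ) ^ (e + 1) := by
      have hpow1 : (1 : ℝ) ≤ (m : ℝ) ^ (e + 1) := one_le_pow₀ (by linarith)
      have h1 : B ≤ B * (m : ℝ) ^ (e + 1) := le_mul_of_one_le_right hB0 hpow1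
      have h2' : ((m:ℝ) + 1) * (c₂ * (m : ℝ) ^ e) ≤ 2 * c₂ * (m : ℝ) ^ (e + 1) := by
        rw [pow_succ]
        have : (m : ℝ) + 1 ≤ 2 * (m : ℝ) := by linarith
        calc ((m:ℝ) + 1) * (c₂ * (m : ℝ) ^ e) ≤ 2 * (m:ℝ) * (c₂ * (m : ℝ) ^ e) :=
              mul_le_mul_of_nonneg_right this (by positivity)
          _ = 2 * c₂ * ((m:ℝ) ^ e * (m:ℝ)) := by ring
      have h3 : (0:ℝ) ≤ (m : ℝ) ^ (e + 1) := by positivity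
      calc B + ((m:ℝ) + 1) * (c₂ * (m : ℝ) ^ e) ≤ B * (m : ℝ) ^ (e+1) + 2 * c₂ * (m : ℝ) ^ (e+1) := by
            linarith
        _ ≤ (B + 2 * c₂ + 1) * (m : ℝ) ^ (e + 1) := by nlinarith
    rw [hsplit]
    linarith

private lemma aux_poly_bounds (g : ℕ → ℝ) (hg : ∀ i, 0 ≤ g i) (P : Polynomial ℝ) (d : ℕ)
    (hdeg : P.degree = d) (hq : ∀ᶠ m : ℕ in atTop, g m = P.eval (m : ℝ)) :
    ∃ c₁ c₂ : ℝ, 0 < c₁ ∧ 0 < c₂ ∧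
      ∀ᶠ m : ℕ in atTop, c₁ * (m : ℝ) ^ d ≤ g m ∧ g m ≤ c₂ * (m : ℝ) ^ d := by
  have hP0 : P ≠ 0 := fun h => by simp [h] at hdeg
  have hnd : P.natDegree = d := Polynomial.natDegree_eq_of_degree_eq_some hdeg
  set c : ℝ := P.leadingCoeff with hc
  have hc0 : c ≠ 0 := Polynomial.leadingCoeff_ne_zero.2 hP0
  have hequiv := Polynomial.isEquivalent_atTop_lead P
  rw [hnd] at hequiv
  have hzne : ∀ᶠ x : ℝ in atTop, c * x ^ d ≠ 0 := by
    filter_upwards [eventually_gt_atTop 0] with x hx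
    exact mul_ne_zero hc0 (pow_ne_zero _ hx.ne')
  have htend1 : Tendsto (fun x : ℝ => P.eval x / (c * x ^ d)) atTop (nhds 1) :=
    (Asymptotics.isEquivalent_iff_tendsto_one hzne).1 hequiv
  have htend : Tendsto (fun m : ℕ => P.eval (m : ℝ) / (m : ℝ) ^ d) atTop (nhds c) := by
    have h2 := (htend1.mul_const c).comp (tendsto_natCast_atTop_atTop (R := ℝ))
    rw [one_mul] at h2
    refine h2.congr' ?_
    filter_upwards [eventually_gt_atTop 0] with m hm
    have hmne : ((m : ℝ)) ≠ 0 := Nat.cast_ne_zero.2 hm.ne'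
    simp only [Function.comp_apply, Pi.div_apply]
    field_simp
  have htendg : Tendsto (fun m : ℕ => g m / (m : ℝ) ^ d) atTop (nhds c) := by
    refine htend.congr' ?_
    filter_upwards [hq] with m hm
    rw [hm]
  have hcnn : 0 ≤ c := by
    refine ge_of_tendsto htendg ?_
    filter_upwards [eventually_gt_atTop 0] with m hm
    have : (0:ℝ) < (m:ℝ) ^ d := by
      have : (0:ℝ) < (m:ℝ) := by exact_mod_cast hm
      positivity
    exact div_nonneg (hg m) this.le
  have hcpos : 0 < c := lt_of_le_of_ne hcnn (Ne.symm hc0)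
  have h1 : ∀ᶠ m : ℕ in atTop, c / 2 < g m / (m : ℝ) ^ d :=
    htendg.eventually (eventually_gt_nhds (by linarith))
  have h2 : ∀ᶠ m : ℕ in atTop, g m / (m : ℝ) ^ d < 2 * c :=
    htendg.eventually (eventually_lt_nhds (by linarith))
  refine ⟨c / 2, 2 * c, by linarith, by linarith, ?_⟩
  filter_upwards [h1, h2, eventually_gt_atTop 0] with m hm1 hm2 hm0
  have hmp : (0:ℝ) < (m:ℝ) := by exact_mod_cast hm0
  have hp : (0 : ℝ) < (m : ℝ) ^ d := by positivity
  constructor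
  · exact le_of_lt ((lt_div_iff₀ hp).1 hm1)
  · exact le_of_lt ((div_lt_iff₀ hp).1 hm2)
private lemma aux_sum_submodule_le {R M ι : Type*} [Semiring R] [AddCommMonoid M] [Module R M]
    (s : Finset ι) (p : ι → Submodule R M) (q : Submodule R M) :
    (∀ j ∈ s, p j ≤ q) → (∑ j ∈ s, p j) ≤ q := by
  classical
  induction s using Finset.induction_on with
  | empty => intro _; simp
  | @insert a s ha ih =>
    intro h
    rw [Finset.sum_insert ha, Submodule.add_eq_sup]
    exact sup_le (h _ (Finset.mem_insert_self _ _))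
      (ih fun j hjs => h _ (Finset.mem_insert_of_mem hjs))

private lemma aux_le_sum_submodule {R M ι : Type*} [Semiring R] [AddCommMonoid M] [Module R M]
    (s : Finset ι) (p : ι → Submodule R M) (j : ι) :
    j ∈ s → p j ≤ ∑ i ∈ s, p i := by
  classical
  induction s using Finset.induction_on with
  | empty => intro hj; exact absurd hj (Finset.notMem_empty j)
  | @insert a s ha ih =>
    intro hj
    rw [Finset.sum_insert ha, Submodule.add_eq_sup]
    rcases Finset.mem_insert.1 hj with rfl | hj'
    · exact le_sup_left
    · exact le_trans (ih hj') le_sup_right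

private lemma aux_map_sum_submodule {R M M' ι : Type*} [Semiring R] [AddCommMonoid M] [Module R M]
    [AddCommMonoid M'] [Module R M'] (f : M →ₗ[R] M') (s : Finset ι) (p : ι → Submodule R M) :
    (∑ j ∈ s, p j).map f = ∑ j ∈ s, (p j).map f := by
  classical
  induction s using Finset.induction_on with
  | empty => simp
  | @insert a s ha ih =>
    rw [Finset.sum_insert ha, Finset.sum_insert ha, Submodule.add_eq_sup,
      Submodule.add_eq_sup, Submodule.map_sup, ih]
set_option maxHeartbeats 1000000 in
/-- (GK dimension of induced modules, Laurent case.)  Let `K = k[x₁^{±1},…,x_n^{±1}]`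
(the group algebra of `ℤⁿ`), `δ` a `k`-derivation of `K` with `δ(x_i) ∈ k·x_i + k`, and
`R = K[x; δ]` the Ore extension (modeled by `φ : K → R` and `x ∈ R` with
`x·f = f·x + δ(f)`).  Let `M` be a right `R`-module that is the module induced from a
cyclic `K`-submodule `N = n₀·K` (i.e. `M = ⊕_{i≥0} N·x^i` freely).  If the standard
filtration dimensions of `N` are eventually given by a polynomial `H` of degree `d`,
then `GK(N ⊗_K R) = d + 1` and `GK(N) = d`, where GK dimensions are computed as
`limsup_m log_m` of the dimensions of the standard filtrations. -/
theorem gkDim_induced_module_laurent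
    (k : Type*) [Field k] (n : ℕ)
    (R : Type*) [Ring R] [Algebra k R]
    (φ : AddMonoidAlgebra k (Fin n → ℤ) →ₐ[k] R) (x : R)
    (δ : Derivation k (AddMonoidAlgebra k (Fin n → ℤ)) (AddMonoidAlgebra k (Fin n → ℤ)))
    -- `δ(x_i) ∈ k·x_i + k` :
    (hδ : ∀ i : Fin n, ∃ a b : k,
      δ (AddMonoidAlgebra.single (Pi.single i 1) 1) =
        a • AddMonoidAlgebra.single (Pi.single i 1) 1 +
          algebraMap k (AddMonoidAlgebra k (Fin n → ℤ)) b)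
    -- Ore extension commutation rule `x·f = f·x + δ(f)` :
    (hcomm : ∀ f : AddMonoidAlgebra k (Fin n → ℤ), x * φ f = φ f * x + φ (δ f))
    (M : Type*) [AddCommGroup M] [Module Rᵐᵒᵖ M] [Module k M]
    (hcompk : ∀ (a : k) (m : M), a • m = op (algebraMap k R a) • m)
    -- `N` is the cyclic `K`-submodule generated by `n₀` :
    (n₀ : M)
    (NS : Submodule k M)
    (hNS : NS = Submodule.span k {y : M | ∃ c : AddMonoidAlgebra k (Fin n → ℤ),
      y = op (φ c) • n₀})
    -- `M` is spanned by the `N·x^i` :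
    (hgen : ∀ m : M, ∃ s : Finset ℕ, ∃ ν : ℕ → M, (∀ i, ν i ∈ NS) ∧
      m = ∑ i ∈ s, op (x ^ i) • ν i)
    -- and the sum `∑ N·x^i` is direct, i.e. `M ≅ N ⊗_K R` :
    (hfree : ∀ (s : Finset ℕ) (ν : ℕ → M), (∀ i, ν i ∈ NS) →
      (∑ i ∈ s, op (x ^ i) • ν i) = 0 → ∀ i ∈ s, ν i = 0)
    -- generating subspace of `K` spanned by `1` and the `x_i^{±1}` :
    (V : Submodule k (AddMonoidAlgebra k (Fin n → ℤ)))
    (hV : V = Submodule.span k {f : AddMonoidAlgebra k (Fin n → ℤ) | ∃ v : Fin n → ℤ,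
      (v = 0 ∨ ∃ i : Fin n, v = Pi.single i 1 ∨ v = -Pi.single i 1) ∧
      f = AddMonoidAlgebra.single v 1})
    -- generating subspace of `R` spanned by the `x_i^{±1}` and `x` :
    (W : Submodule k R) (hW : W = V.map φ.toLinearMap ⊔ Submodule.span k {x})
    -- the Hilbert function of the standard filtration of `N` is eventually a
    -- polynomial `H` of degree `d` :
    (H : Polynomial ℚ) (d : ℕ) (hHdeg : H.degree = d)
    (hH : ∀ᶠ m : ℕ in atTop,
      (Module.finrank k (Submodule.span k
        {y : M | ∃ c ∈ (V ^ m : Submodule k (AddMonoidAlgebra k (Fin n → ℤ))),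
          y = op (φ c) • n₀}) : ℚ) = H.eval (m : ℚ)) :
    Filter.limsup (fun m : ℕ => Real.logb m
        (Module.finrank k (Submodule.span k
          {y : M | ∃ r ∈ (W ^ m : Submodule k R), y = op r • n₀}))) atTop = (d + 1 : ℝ) ∧
    Filter.limsup (fun m : ℕ => Real.logb m
        (Module.finrank k (Submodule.span k
          {y : M | ∃ c ∈ (V ^ m : Submodule k (AddMonoidAlgebra k (Fin n → ℤ))),
            y = op (φ c) • n₀}))) atTop = (d : ℝ) := by
  classical
  -- the evaluation map `r ↦ n₀ · r`
  obtain ⟨ε, hε⟩ : ∃ ε : R →ₗ[k] M, ∀ r, ε r = op r • n₀ := by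
    refine ⟨{ toFun := fun r => op r • n₀, map_add' := ?_, map_smul' := ?_ }, fun _ => rfl⟩
    · intro r s
      show op (r + s) • n₀ = op r • n₀ + op s • n₀
      rw [op_add, add_smul]
    · intro a r
      show op (a • r) • n₀ = a • (op r • n₀)
      rw [Algebra.smul_def, Algebra.commutes, op_mul, mul_smul, hcompk]
  -- right multiplication by `x^j`
  obtain ⟨L, hL⟩ : ∃ L : ℕ → M →ₗ[k] M, ∀ j v, L j v = op (x ^ j) • v := by
    refine ⟨fun j => { toFun := fun v => op (x ^ j) • v, map_add' := ?_, map_smul' := ?_ },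
      fun _ _ => rfl⟩
    · intro v w
      exact smul_add _ v w
    · intro a v
      show op (x ^ j) • (a • v) = a • (op (x ^ j) • v)
      rw [hcompk a v, ← mul_smul, ← op_mul, Algebra.commutes, op_mul, mul_smul, hcompk]
  obtain ⟨ψ, hψc, hψ⟩ : ∃ ψ : AddMonoidAlgebra k (Fin n → ℤ) →ₗ[k] M,
      ψ = ε.comp φ.toLinearMap ∧ ∀ c, ψ c = op (φ c) • n₀ :=
    ⟨ε.comp φ.toLinearMap, rfl, fun c => hε _⟩
  obtain ⟨N, hN⟩ : ∃ N : ℕ → Submodule k M, ∀ i, N i = (V ^ i).map ψ :=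
    ⟨_, fun _ => rfl⟩
  obtain ⟨ρ, hρ⟩ : ∃ ρ : ℕ → AddMonoidAlgebra k (Fin n → ℤ) →ₗ[k] R,
      ∀ j c, ρ j c = φ c * x ^ j :=
    ⟨fun j => (LinearMap.mulRight k (x ^ j)).comp φ.toLinearMap, fun _ _ => rfl⟩
  -- identification of the filtration spans
  have hNm : ∀ m : ℕ, Submodule.span k
      {y : M | ∃ c ∈ (V ^ m : Submodule k (AddMonoidAlgebra k (Fin n → ℤ))),
        y = op (φ c) • n₀} = N m := by
    intro m
    have hset : {y : M | ∃ c ∈ (V ^ m : Submodule k (AddMonoidAlgebra k (Fin n → ℤ))),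
        y = op (φ c) • n₀} = ψ '' ((V ^ m : Submodule k (AddMonoidAlgebra k (Fin n → ℤ))) : Set _) := by
      ext y
      constructor
      · rintro ⟨c, hc, rfl⟩; exact ⟨c, hc, hψ c⟩
      · rintro ⟨c, hc, rfl⟩; exact ⟨c, hc, hψ c⟩
    rw [hset, Submodule.span_image, Submodule.span_eq, ← hN]
  have hWm' : ∀ m : ℕ, Submodule.span k {y : M | ∃ r ∈ (W ^ m : Submodule k R), y = op r • n₀}
      = (W ^ m).map ε := by
    intro m
    have hset : {y : M | ∃ r ∈ (W ^ m : Submodule k R), y = op r • n₀}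
        = ε '' ((W ^ m : Submodule k R) : Set R) := by
      ext y
      constructor
      · rintro ⟨r, hr, rfl⟩; exact ⟨r, hr, hε r⟩
      · rintro ⟨r, hr, rfl⟩; exact ⟨r, hr, hε r⟩
    rw [hset, Submodule.span_image, Submodule.span_eq]
  -- basic members of V
  have h1V : (1 : AddMonoidAlgebra k (Fin n → ℤ)) ∈ V := by
    rw [hV]
    exact Submodule.subset_span ⟨0, Or.inl rfl, AddMonoidAlgebra.one_def⟩
  have hxiV : ∀ i : Fin n, AddMonoidAlgebra.single (Pi.single i (1:ℤ)) (1:k) ∈ V := fun i => by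
    rw [hV]; exact Submodule.subset_span ⟨Pi.single i 1, Or.inr ⟨i, Or.inl rfl⟩, rfl⟩
  have hxiV' : ∀ i : Fin n, AddMonoidAlgebra.single (-Pi.single i (1:ℤ)) (1:k) ∈ V := fun i => by
    rw [hV]; exact Submodule.subset_span ⟨-Pi.single i 1, Or.inr ⟨i, Or.inr rfl⟩, rfl⟩
  have hVle2 : V ≤ V * V := fun v hv => by
    simpa using Submodule.mul_mem_mul h1V hv
  -- δ maps V into V²
  have hδV : ∀ c ∈ V, δ c ∈ V * V := by
    intro c hc
    rw [hV] at hc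
    induction hc using Submodule.span_induction with
    | mem f hf =>
      obtain ⟨v, hv, rfl⟩ := hf
      rcases hv with rfl | ⟨i, rfl | rfl⟩
      · rw [← AddMonoidAlgebra.one_def, Derivation.map_one_eq_zero]; exact zero_mem _
      · obtain ⟨a, b, hab⟩ := hδ i
        rw [hab]
        refine add_mem (Submodule.smul_mem _ _ (hVle2 (hxiV i))) ?_
        rw [Algebra.algebraMap_eq_smul_one]
        exact Submodule.smul_mem _ _ (hVle2 h1V)
      · obtain ⟨a, b, hab⟩ := hδ i
        set u : AddMonoidAlgebra k (Fin n → ℤ) := AddMonoidAlgebra.single (Pi.single i (1:ℤ)) (1:k) with hu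
        set w : AddMonoidAlgebra k (Fin n → ℤ) := AddMonoidAlgebra.single (-Pi.single i (1:ℤ)) (1:k) with hw
        have huw : u * w = 1 := by
          rw [hu, hw, AddMonoidAlgebra.single_mul_single]
          simp [AddMonoidAlgebra.one_def]
        have hwu : w * u = 1 := by rw [mul_comm]; exact huw
        have h0 : u * δ w + w * δ u = 0 := by
          have hlz := δ.leibniz u w
          rw [huw, Derivation.map_one_eq_zero] at hlz
          simpa [smul_eq_mul] using hlz.symm
        have hw2 : δ w = -(w * (w * δ u)) := by
          have h1 : w * (u * δ w) + w * (w * δ u) = 0 := by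
            rw [← mul_add, h0, mul_zero]
          rw [← mul_assoc, hwu, one_mul] at h1
          exact eq_neg_of_add_eq_zero_left h1
        have e1 : w * (w * (a • u)) = a • w := by
          rw [mul_smul_comm, hwu, mul_smul_comm, mul_one]
        have e2 : w * (w * algebraMap k (AddMonoidAlgebra k (Fin n → ℤ)) b) = b • (w * w) := by
          rw [mul_comm w (algebraMap k (AddMonoidAlgebra k (Fin n → ℤ)) b), ← Algebra.smul_def,
            mul_smul_comm]
        have hδw : δ w = -(a • w + b • (w * w)) := by
          rw [hw2, hab, mul_add, mul_add, e1, e2]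
        rw [hδw]
        exact neg_mem (add_mem (Submodule.smul_mem _ _ (hVle2 (hxiV' i)))
          (Submodule.smul_mem _ _ (Submodule.mul_mem_mul (hxiV' i) (hxiV' i))))
    | zero => rw [Derivation.map_zero]; exact zero_mem _
    | add y z hy hz ihy ihz => rw [Derivation.map_add]; exact add_mem ihy ihz
    | smul a y hy ihy => rw [Derivation.map_smul]; exact Submodule.smul_mem _ _ ihy
  -- δ maps V^i into V^(i+1)
  have hδpow : ∀ i : ℕ, ∀ c ∈ (V ^ i : Submodule k (AddMonoidAlgebra k (Fin n → ℤ))),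
      δ c ∈ V ^ (i + 1) := by
    intro i
    induction i with
    | zero =>
      intro c hc
      rw [pow_zero] at hc
      obtain ⟨y, rfl⟩ := Submodule.mem_one.1 hc
      rw [Derivation.map_algebraMap]
      exact zero_mem _
    | succ i ih =>
      intro c hc
      rw [pow_succ'] at hc
      refine Submodule.mul_induction_on hc ?_ ?_
      · intro v hv c' hc'
        have h1 : v * δ c' ∈ V * V ^ (i + 1) := Submodule.mul_mem_mul hv (ih c' hc')
        rw [← pow_succ'] at h1
        have h2 : c' * δ v ∈ V ^ i * (V * V) := Submodule.mul_mem_mul hc' (hδV v hv)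
        have hEq : (V : Submodule k (AddMonoidAlgebra k (Fin n → ℤ))) ^ i * (V * V) = V ^ (i + 1 + 1) := by
          rw [← pow_two, ← pow_add]
        rw [hEq] at h2
        rw [Derivation.leibniz, smul_eq_mul, smul_eq_mul]
        exact add_mem h1 h2
      · intro y z hy hz
        rw [Derivation.map_add]
        exact add_mem hy hz
  -- images of V-powers land in W-powers
  have hφVW : ∀ t : ℕ, (V.map φ.toLinearMap) ^ t ≤ W ^ t := by
    intro t
    induction t with
    | zero => rw [pow_zero, pow_zero]
    | succ t ih =>
      rw [pow_succ, pow_succ]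
      exact mul_le_mul' ih (hW ▸ le_sup_left)
  have hxW : ∀ j : ℕ, x ^ j ∈ (W ^ j : Submodule k R) := by
    intro j
    induction j with
    | zero => rw [pow_zero, pow_zero]; exact Submodule.mem_one.2 ⟨1, map_one _⟩
    | succ j ih =>
      rw [pow_succ, pow_succ]
      exact Submodule.mul_mem_mul ih
        (hW ▸ Submodule.mem_sup_right (Submodule.mem_span_singleton_self x))
  have hSle : ∀ m : ℕ, (∑ j ∈ Finset.range (m + 1), (V ^ (m - j)).map (ρ j)) ≤ W ^ m := by
    intro m
    apply aux_sum_submodule_le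
    intro j hj
    have hjm : j ≤ m := Nat.lt_succ_iff.1 (Finset.mem_range.1 hj)
    rintro r ⟨c, hc, rfl⟩
    have h1 : φ c ∈ (W ^ (m - j) : Submodule k R) := by
      have hmem : φ.toLinearMap c ∈ (V ^ (m - j)).map φ.toLinearMap := ⟨c, hc, rfl⟩
      rw [Submodule.map_pow] at hmem
      exact hφVW _ hmem
    have h2 := Submodule.mul_mem_mul h1 (hxW j)
    rw [← pow_add, Nat.sub_add_cancel hjm] at h2
    rw [hρ]
    exact h2
  -- the key filtration identity `W^m = ∑_j φ(V^{m-j}) x^j`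
  have hWSS : ∀ m : ℕ, (W ^ m : Submodule k R)
      = ∑ j ∈ Finset.range (m + 1), (V ^ (m - j)).map (ρ j) := by
    intro m
    induction m with
    | zero =>
      rw [Finset.sum_range_one, pow_zero, Nat.zero_sub, pow_zero]
      apply le_antisymm
      · intro r hr
        obtain ⟨a, rfl⟩ := Submodule.mem_one.1 hr
        refine ⟨algebraMap k (AddMonoidAlgebra k (Fin n → ℤ)) a, Submodule.mem_one.2 ⟨a, rfl⟩, ?_⟩
        rw [hρ, pow_zero, mul_one, AlgHom.commutes]
      · rintro r ⟨c, hc, rfl⟩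
        obtain ⟨a, rfl⟩ := Submodule.mem_one.1 hc
        rw [hρ, pow_zero, mul_one, AlgHom.commutes]
        exact Submodule.mem_one.2 ⟨a, rfl⟩
    | succ m ih =>
      apply le_antisymm
      · rw [pow_succ', ih, Finset.mul_sum]
        apply aux_sum_submodule_le
        intro j hj
        have hjm : j ≤ m := Nat.lt_succ_iff.1 (Finset.mem_range.1 hj)
        rw [hW, ← Submodule.add_eq_sup, add_mul, Submodule.add_eq_sup]
        apply sup_le
        · refine le_trans ?_ (aux_le_sum_submodule (Finset.range (m + 2))
            (fun j' => (V ^ (m + 1 - j')).map (ρ j')) j (Finset.mem_range.2 (by omega)))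
          rw [Submodule.mul_le]
          rintro p ⟨v, hv, rfl⟩ q ⟨c, hc, rfl⟩
          refine ⟨v * c, ?_, ?_⟩
          · have hm : v * c ∈ V * V ^ (m - j) := Submodule.mul_mem_mul hv hc
            rw [← pow_succ'] at hm
            rwa [Nat.succ_sub hjm]
          · rw [hρ, hρ, map_mul, AlgHom.toLinearMap_apply, mul_assoc]
        · rw [Submodule.mul_le]
          rintro p hp q ⟨c, hc, rfl⟩
          obtain ⟨a, rfl⟩ := Submodule.mem_span_singleton.1 hp
          have hkey : (a • x) * (ρ j c) = a • (ρ (j + 1) c) + a • (ρ j (δ c)) := by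
            rw [hρ, hρ, hρ, smul_mul_assoc, ← mul_assoc x (φ c) (x ^ j), hcomm c, add_mul,
              mul_assoc (φ c) x (x ^ j), ← pow_succ', ← smul_add]
          rw [hkey]
          refine add_mem ?_ ?_
          · refine aux_le_sum_submodule (Finset.range (m + 2))
              (fun j' => (V ^ (m + 1 - j')).map (ρ j')) (j + 1) (Finset.mem_range.2 (by omega)) ?_
            exact Submodule.smul_mem _ _ ⟨c, by rw [show m + 1 - (j + 1) = m - j from by omega]; exact hc, rfl⟩
          · refine aux_le_sum_submodule (Finset.range (m + 2))
              (fun j' => (V ^ (m + 1 - j')).map (ρ j')) j (Finset.mem_range.2 (by omega)) ?_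
            refine Submodule.smul_mem _ _ ⟨δ c, ?_, rfl⟩
            rw [Nat.succ_sub hjm]
            exact hδpow _ c hc
      · exact hSle (m + 1)
  -- relate `ε ∘ ρ j` with `L j ∘ ψ`
  have hερ : ∀ j : ℕ, ε.comp (ρ j) = (L j).comp ψ := by
    intro j
    apply LinearMap.ext
    intro c
    simp only [LinearMap.comp_apply]
    rw [hρ, hε, hL, hψ, op_mul, mul_smul]
  have hsplit : ∀ m : ℕ,
      Submodule.span k {y : M | ∃ r ∈ (W ^ m : Submodule k R), y = op r • n₀}
      = ∑ j ∈ Finset.range (m + 1), (N (m - j)).map (L j) := by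
    intro m
    rw [hWm' m, hWSS m, aux_map_sum_submodule]
    refine Finset.sum_congr rfl fun j _ => ?_
    rw [hN, ← Submodule.map_comp, ← Submodule.map_comp, hερ j]
  -- finite dimensionality
  have hVfin : V.FG := by
    rw [hV]
    apply Submodule.fg_span
    have hset : {f : AddMonoidAlgebra k (Fin n → ℤ) | ∃ v : Fin n → ℤ,
        (v = 0 ∨ ∃ i : Fin n, v = Pi.single i 1 ∨ v = -Pi.single i 1) ∧
        f = AddMonoidAlgebra.single v 1}
        = (fun v : Fin n → ℤ => AddMonoidAlgebra.single v (1:k)) ''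
          {v : Fin n → ℤ | v = 0 ∨ ∃ i : Fin n, v = Pi.single i 1 ∨ v = -Pi.single i 1} := by
      ext f
      constructor
      · rintro ⟨v, hv, rfl⟩; exact ⟨v, hv, rfl⟩
      · rintro ⟨v, hv, rfl⟩; exact ⟨v, hv, rfl⟩
    rw [hset]
    apply Set.Finite.image
    have hsub : {v : Fin n → ℤ | v = 0 ∨ ∃ i : Fin n, v = Pi.single i 1 ∨ v = -Pi.single i 1} ⊆
        insert 0 ((Set.range fun i : Fin n => Pi.single i (1:ℤ)) ∪
          (Set.range fun i : Fin n => -Pi.single i (1:ℤ))) := by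
      rintro v (rfl | ⟨i, rfl | rfl⟩)
      · exact Set.mem_insert _ _
      · exact Set.mem_insert_of_mem _ (Or.inl ⟨i, rfl⟩)
      · exact Set.mem_insert_of_mem _ (Or.inr ⟨i, rfl⟩)
    exact Set.Finite.subset (((Set.finite_range _).union (Set.finite_range _)).insert 0) hsub
  have hVpowfin : ∀ i : ℕ, ((V : Submodule k (AddMonoidAlgebra k (Fin n → ℤ))) ^ i).FG := by
    intro i
    induction i with
    | zero => rw [pow_zero, Submodule.one_eq_span]; exact Submodule.fg_span_singleton _
    | succ i ih => rw [pow_succ]; exact Submodule.FG.mul ih hVfin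
  have hNfd : ∀ i : ℕ, FiniteDimensional k (N i) := fun i => by
    rw [hN]
    exact (Submodule.fg_iff_finiteDimensional _).1 ((hVpowfin i).map ψ)
  have hNle : ∀ i : ℕ, N i ≤ NS := by
    intro i y hy
    rw [hN] at hy
    obtain ⟨c, hc, rfl⟩ := hy
    rw [hNS]
    exact Submodule.subset_span ⟨c, hψ c⟩
  -- dimension count via freeness
  have hdim : ∀ m : ℕ,
      Module.finrank k (∑ j ∈ Finset.range (m + 1), (N (m - j)).map (L j) : Submodule k M)
      = ∑ i ∈ Finset.range (m + 1), Module.finrank k (N i) := by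
    intro m
    haveI hfd : ∀ j : Fin (m + 1), FiniteDimensional k (N (m - (j : ℕ))) := fun _ => hNfd _
    set Φ : ((j : Fin (m + 1)) → (N (m - (j : ℕ)))) →ₗ[k] M :=
      ∑ j : Fin (m + 1), (L (j : ℕ)).comp ((N (m - (j : ℕ))).subtype.comp (LinearMap.proj j))
      with hΦ
    have hΦapp : ∀ ν, Φ ν = ∑ j : Fin (m + 1), op (x ^ (j : ℕ)) • ((ν j : M)) := by
      intro ν
      rw [hΦ, LinearMap.sum_apply]
      refine Finset.sum_congr rfl fun j _ => ?_
      simp only [LinearMap.comp_apply, LinearMap.proj_apply, Submodule.subtype_apply]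
      exact hL _ _
    have hker : ∀ ν, Φ ν = 0 → ν = 0 := by
      intro ν hν
      set ν' : ℕ → M := fun i => if h : i < m + 1 then ((ν ⟨i, h⟩ : M)) else 0 with hν'
      have hmem : ∀ i, ν' i ∈ NS := by
        intro i
        rw [hν']
        dsimp only
        split
        · exact hNle _ (ν ⟨i, _⟩).2
        · exact zero_mem _
      have hsum : ∑ i ∈ Finset.range (m + 1), op (x ^ i) • ν' i = 0 := by
        rw [← Fin.sum_univ_eq_sum_range (fun i => op (x ^ i) • ν' i) (m + 1)]
        rw [← hν, hΦapp]
        refine Finset.sum_congr rfl fun j _ => ?_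
        congr 1
        rw [hν']
        dsimp only
        rw [dif_pos j.isLt]
      have hall := hfree (Finset.range (m + 1)) ν' hmem hsum
      funext j
      have hj0 := hall (j : ℕ) (Finset.mem_range.2 j.isLt)
      rw [hν'] at hj0
      dsimp only at hj0
      rw [dif_pos j.isLt] at hj0
      exact Subtype.ext hj0
    have hinj : Function.Injective Φ := by
      rw [← LinearMap.ker_eq_bot]
      exact LinearMap.ker_eq_bot'.2 hker
    have hrange : LinearMap.range Φ = ∑ j ∈ Finset.range (m + 1), (N (m - j)).map (L j) := by
      apply le_antisymm
      · rintro _ ⟨ν, rfl⟩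
        rw [hΦapp]
        apply Submodule.sum_mem
        intro j _
        refine aux_le_sum_submodule (Finset.range (m + 1))
          (fun j' => (N (m - j')).map (L j')) (j : ℕ) (Finset.mem_range.2 j.isLt) ?_
        exact ⟨(ν j : M), (ν j).2, hL _ _⟩
      · apply aux_sum_submodule_le
        intro j hj
        rintro _ ⟨w, hw, rfl⟩
        have hjlt : j < m + 1 := Finset.mem_range.1 hj
        refine ⟨Pi.single (⟨j, hjlt⟩ : Fin (m + 1)) ⟨w, hw⟩, ?_⟩
        rw [hΦapp]
        rw [Finset.sum_eq_single (⟨j, hjlt⟩ : Fin (m + 1))]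
        · rw [Pi.single_eq_same, hL]
        · intro b _ hb
          rw [Pi.single_eq_of_ne hb]
          simp
        · intro hnot
          exact absurd (Finset.mem_univ _) hnot
    calc Module.finrank k (∑ j ∈ Finset.range (m + 1), (N (m - j)).map (L j) : Submodule k M)
        = Module.finrank k (LinearMap.range Φ) := by rw [hrange]
      _ = Module.finrank k ((j : Fin (m + 1)) → (N (m - (j : ℕ)))) :=
          LinearMap.finrank_range_of_inj hinj
      _ = ∑ j : Fin (m + 1), Module.finrank k (N (m - (j : ℕ))) := Module.finrank_pi_fintype k
      _ = ∑ j ∈ Finset.range (m + 1), Module.finrank k (N (m - j)) :=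
          Fin.sum_univ_eq_sum_range (fun j => Module.finrank k (N (m - j))) (m + 1)
      _ = ∑ i ∈ Finset.range (m + 1), Module.finrank k (N i) :=
          Finset.sum_range_reflect (fun i => Module.finrank k (N i)) (m + 1)
  -- analysis
  obtain ⟨g, hg⟩ : ∃ g : ℕ → ℝ, ∀ i, g i = (Module.finrank k (N i) : ℝ) := ⟨_, fun _ => rfl⟩
  have hg0 : ∀ i, 0 ≤ g i := fun i => by rw [hg]; exact Nat.cast_nonneg _
  set P : Polynomial ℝ := H.map (algebraMap ℚ ℝ) with hPdef
  have hPdeg : P.degree = d := by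
    rw [hPdef, Polynomial.degree_map_eq_of_injective (algebraMap ℚ ℝ).injective]
    exact hHdeg
  have hH' : ∀ᶠ m : ℕ in atTop, g m = P.eval (m : ℝ) := by
    filter_upwards [hH] with m hm
    rw [hNm m] at hm
    have e1 : P.eval (m : ℝ) = ((H.eval (m : ℚ) : ℚ) : ℝ) := by
      have e0 : ((m : ℕ) : ℝ) = algebraMap ℚ ℝ ((m : ℕ) : ℚ) := by
        rw [eq_ratCast (algebraMap ℚ ℝ)]
        push_cast
        ring
      rw [hPdef, e0, Polynomial.eval_map,
        Polynomial.eval₂_at_apply, eq_ratCast]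
    rw [e1, ← hm, hg]
    push_cast
    ring
  obtain ⟨c₁, c₂, hc₁, hc₂, hbnd⟩ := aux_poly_bounds g hg0 P d hPdeg hH'
  constructor
  · have hfun : (fun m : ℕ => Real.logb m
        (Module.finrank k (Submodule.span k
          {y : M | ∃ r ∈ (W ^ m : Submodule k R), y = op r • n₀})))
        = fun m : ℕ => Real.logb m (∑ i ∈ Finset.range (m + 1), g i) := by
      funext m
      rw [hsplit m, hdim m]
      congr 1
      rw [Nat.cast_sum]
      exact Finset.sum_congr rfl fun i _ => (hg i).symm
    rw [hfun]
    obtain ⟨C₁, C₂, hC₁, hC₂, hSb⟩ := aux_sum_bounds g hg0 d c₁ c₂ hc₁ hc₂ hbnd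
    have ht := aux_logb_squeeze (fun m => ∑ i ∈ Finset.range (m + 1), g i) (d + 1) C₁ C₂ hC₁ hC₂ hSb
    rw [show ((d : ℝ) + 1) = (((d + 1 : ℕ) : ℝ)) by push_cast; ring]
    exact ht.limsup_eq
  · have hfun : (fun m : ℕ => Real.logb m
        (Module.finrank k (Submodule.span k
          {y : M | ∃ c ∈ (V ^ m : Submodule k (AddMonoidAlgebra k (Fin n → ℤ))),
            y = op (φ c) • n₀})))
        = fun m : ℕ => Real.logb m (g m) := by
      funext m
      rw [hNm m, hg]
    rw [hfun]
    exact (aux_logb_squeeze g d c₁ c₂ hc₁ hc₂ hbnd).limsup_eq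
end

section
/- Let R be a ring, K ⊆ R a subring such that R is a flat left K-module, M an R-module, and N a K-submodule of M such that the natural map N ⊗_K R → M is an isomorphism of R-modules. If M is simple as an R-module and R is faithfully flat over K, then N is a simple K-module. -/
/-!
For a nonzero `K`-submodule `N' ⊆ N`, the image of `N' ⊗[K] R → N ⊗[K] R ≅ M` is a nonzero
right `R`-submodule of `M`, hence all of `M` by simplicity. So `N' ⊗[K] R → N ⊗[K] R` is
surjective, and faithful flatness of `R` forces `N' = N`.
-/

open TensorProduct MulOpposite

namespace Module.FaithfullyFlat

variable {K : Type*} [CommRing K] (R : Type*) [AddCommGroup R] [Module K R] [FaithfullyFlat K R]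
  {P Q : Type*} [AddCommGroup P] [Module K P] [AddCommGroup Q] [Module K Q]

theorem rTensor_surjective_iff_surjective (f : P →ₗ[K] Q) :
    Function.Surjective (f.rTensor R) ↔ Function.Surjective f := by
  rw [← LinearMap.exact_zero_iff_surjective (Unit ⊗[K] R),
    ← LinearMap.exact_zero_iff_surjective Unit]
  conv_rhs => rw [← rTensor_exact_iff_exact K R]
  simp

end Module.FaithfullyFlat

section

variable {K R M : Type*} [CommRing K] [Ring R] [Module K R]
  [AddCommGroup M] [Module Rᵐᵒᵖ M] [Module K M]

def LinearMap.rightRange {P : Type*} [AddCommGroup P] [Module K P] (φ : P ⊗[K] R →ₗ[K] M)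
    (hφ : ∀ p r s, φ (p ⊗ₜ (r * s)) = op s • φ (p ⊗ₜ r)) : Submodule Rᵐᵒᵖ M where
  carrier := LinearMap.range φ
  add_mem' := add_mem
  zero_mem' := zero_mem _
  smul_mem' := by
    rintro s _ ⟨x, rfl⟩
    induction x using TensorProduct.induction_on with
    | zero => exact ⟨0, by simp⟩
    | tmul p r => exact ⟨p ⊗ₜ (r * s.unop), hφ p r s.unop⟩
    | add x y hx hy => rw [map_add, smul_add]; exact add_mem hx hy

theorem Submodule.eq_top_of_tensor_equiv_simple [Module.FaithfullyFlat K R]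
    [IsSimpleModule Rᵐᵒᵖ M] {N : Submodule K M} (e : N ⊗[K] R ≃ₗ[K] M)
    (he : ∀ (ν : N) (r : R), e (ν ⊗ₜ r) = op r • (ν : M))
    {N' : Submodule K N} (hN' : N' ≠ ⊥) : N' = ⊤ := by
  set φ := e.toLinearMap ∘ₗ N'.subtype.rTensor R
  have hφ : ∀ (ν : N') (r : R), φ (ν ⊗ₜ r) = op r • ((ν : N) : M) := fun ν r => he ν r
  have hφR : ∀ ν r s, φ (ν ⊗ₜ (r * s)) = op s • φ (ν ⊗ₜ r) := by
    simp only [hφ, op_mul, mul_smul, implies_true]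
  have hrange : φ.rightRange hφR = ⊤ := by
    refine (eq_bot_or_eq_top _).resolve_left fun h => ?_
    obtain ⟨ν, hν, hν0⟩ := Submodule.exists_mem_ne_zero_of_ne_bot hN'
    have hmem : φ (⟨ν, hν⟩ ⊗ₜ 1) ∈ φ.rightRange hφR := ⟨_, rfl⟩
    rw [h, Submodule.mem_bot, hφ, op_one, one_smul] at hmem
    exact hν0 (Subtype.ext hmem)
  have hφsurj : Function.Surjective φ := fun m =>
    (hrange ▸ Submodule.mem_top : m ∈ φ.rightRange hφR)
  rwa [LinearMap.coe_comp, LinearEquiv.coe_coe, EquivLike.comp_surjective,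
    Module.FaithfullyFlat.rTensor_surjective_iff_surjective, ← LinearMap.range_eq_top,
    Submodule.range_subtype] at hφsurj

end

theorem simple_base_of_induced_simple_general
    (K : Type*) [CommRing K] (R : Type*) [Ring R] [Algebra K R]
    [Module.FaithfullyFlat K R]
    (M : Type*) [AddCommGroup M] [Module Rᵐᵒᵖ M] [Module K M]
    [IsSimpleModule Rᵐᵒᵖ M]
    (N : Submodule K M)
    (e : TensorProduct K N R ≃ₗ[K] M)
    (he : ∀ (ν : N) (r : R), e (ν ⊗ₜ[K] r) = op r • (ν : M)) :
    IsSimpleModule K N := by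
  have : Nontrivial N := by
    refine (subsingleton_or_nontrivial N).resolve_left fun _ => ?_
    have := IsSimpleModule.nontrivial Rᵐᵒᵖ M
    exact not_subsingleton M e.symm.toEquiv.subsingleton
  exact { eq_bot_or_eq_top N' :=
    (eq_or_ne N' ⊥).imp_right (Submodule.eq_top_of_tensor_equiv_simple e he) }

/-- Let `K ⊆ R` with `R` (faithfully) flat as a left `K`-module, `M` a right `R`-module,
and `N` a `K`-submodule of `M` such that the natural map `N ⊗_K R → M`, `n ⊗ r ↦ n·r`,
is an isomorphism.  If `M` is a simple `R`-module then `N` is a simple `K`-module. -/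
theorem simple_base_of_induced_simple
    (K : Type*) [CommRing K] (R : Type*) [Ring R] [Algebra K R]
    [Module.Flat K R] [Module.FaithfullyFlat K R]
    (M : Type*) [AddCommGroup M] [Module Rᵐᵒᵖ M] [Module K M]
    (hcomp : ∀ (c : K) (m : M), c • m = op (algebraMap K R c) • m)
    [IsSimpleModule Rᵐᵒᵖ M]
    (N : Submodule K M)
    (e : TensorProduct K N R ≃ₗ[K] M)
    (he : ∀ (ν : N) (r : R), e (ν ⊗ₜ[K] r) = op r • (ν : M)) :
    IsSimpleModule K N :=
  simple_base_of_induced_simple_general K R M N e he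
end
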